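/- Let l ≥ 1 and let σ be a permutation of {1,…,2l} commuting with ι. Then the sign of σ equals (−1)^m, where m is the number of indices i with 1 ≤ i ≤ l and σ(i) ≥ l+1. -/

import Mathlib

noncomputable section

/-- The permutation `ι` of `{1,…,n}` given (1-based) by `i ↦ n + 1 - i`. -/
def iotaPerm (n : ℕ) : Equiv.Perm (Fin n) where
  toFun i := ⟨n - 1 - (i : ℕ), by have := i.isLt; omega⟩
  invFun i := ⟨n - 1 - (i : ℕ), by have := i.isLt; omega⟩
  left_inv i := by have := i.isLt; apply Fin.ext; show n - 1 - (n - 1 - (i : ℕ)) = _; omega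
  right_inv i := by have := i.isLt; apply Fin.ext; show n - 1 - (n - 1 - (i : ℕ)) = _; omega

end

/-!
Call `i` a flip of `σ` if `i` lies in the first half but `σ i` in the second. Composing `σ` with
the transposition `(σ i, ι (σ i))` of a flip `i` keeps it in the centralizer of `ι` and removes
exactly that flip, so by induction it suffices to treat a `σ` without flips. Such a `σ` preserves
both halves, and `ι` conjugates its restriction to the first half into its restriction to the
second; the two restrictions therefore have the same sign, and `sign σ` is a square, i.e. `1`.
The first half may be any set `p` that the involution `ι` maps onto its complement.
-/

open Finset

namespace Equiv.Perm

variable {α : Type*} {ι σ : Perm α}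

theorem commute_swap_apply_self [DecidableEq α] (hι : Function.Involutive ι) (a : α) :
    Commute (swap a (ι a)) ι :=
  (by rw [mul_swap_eq_swap_mul, hι a, swap_comm] : ι * swap a (ι a) = swap a (ι a) * ι).symm

variable [Fintype α] {p : α → Prop} [DecidablePred p]

def flipSet (p : α → Prop) [DecidablePred p] (σ : Perm α) : Finset α :=
  univ.filter fun x => p x ∧ ¬p (σ x)

@[simp]
theorem mem_flipSet {x : α} : x ∈ flipSet p σ ↔ p x ∧ ¬p (σ x) := by
  simp [flipSet]

variable [DecidableEq α]

theorem sign_eq_one_of_flipSet_eq_empty (hp : ∀ x, p (ι x) ↔ ¬p x) (hσι : Commute σ ι)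
    (hσ : flipSet p σ = ∅) : sign σ = 1 := by
  have hσι_apply (x : α) : σ (ι x) = ι (σ x) := Perm.congr_fun hσι.eq x
  have hσp (x : α) : p (σ x) ↔ p x := by
    have hmaps : ∀ y, p y → p (σ y) := by
      simpa [flipSet, filter_eq_empty_iff] using hσ
    refine ⟨fun hσx => ?_, hmaps x⟩
    by_contra hx
    have := hmaps (ι x) ((hp x).mpr hx)
    rw [hσι_apply, hp] at this
    exact this hσx
  have hσnp (x : α) : ¬p (σ x) ↔ ¬p x := not_congr (hσp x)
  have hdecomp :
      σ = subtypeCongr (σ.subtypePerm hσp) (σ.subtypePerm (p := fun x => ¬p x) hσnp) := by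
    ext x
    by_cases hx : p x <;> simp [hx]
  have hsign : sign (σ.subtypePerm hσp) = sign (σ.subtypePerm (p := fun x => ¬p x) hσnp) :=
    sign_eq_sign_of_equiv _ _ (ι.subtypeEquiv fun x => by simp [hp])
      fun x => Subtype.ext (hσι_apply x).symm
  rw [hdecomp, sign_subtypeCongr, hsign, Int.units_mul_self]

theorem flipSet_swap_mul (hp : ∀ x, p (ι x) ↔ ¬p x) (hσι : Commute σ ι) {i : α}
    (hi : i ∈ flipSet p σ) :
    flipSet p (swap (σ i) (ι (σ i)) * σ) = (flipSet p σ).erase i := by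
  obtain ⟨hpi, hpσi⟩ := mem_flipSet.mp hi
  ext j
  simp only [mem_flipSet, mem_erase, Perm.mul_apply]
  by_cases hji : j = i
  · subst hji
    simp [hp, hpσi]
  by_cases hpj : p j
  · have hne_left : σ j ≠ σ i := σ.injective.ne hji
    have hne_right : σ j ≠ ι (σ i) := by
      rw [← show σ (ι i) = ι (σ i) from Perm.congr_fun hσι.eq i]
      rintro hj
      exact (hp i).mp (σ.injective hj ▸ hpj) hpi
    rw [swap_apply_of_ne_of_ne hne_left hne_right]
    simp [hji, hpj]
  · simp [hpj]

theorem sign_eq_neg_one_pow_card_flipSet (hι : Function.Involutive ι) (hp : ∀ x, p (ι x) ↔ ¬p x)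
    (hσι : Commute σ ι) : sign σ = (-1) ^ (flipSet p σ).card := by
  suffices ∀ n (σ : Perm α), Commute σ ι → (flipSet p σ).card = n → sign σ = (-1) ^ n from
    this _ σ hσι rfl
  intro n
  induction n with
  | zero => exact fun σ hσι hn => sign_eq_one_of_flipSet_eq_empty hp hσι (card_eq_zero.mp hn)
  | succ n ih =>
    intro σ hσι hn
    obtain ⟨i, hi⟩ : (flipSet p σ).Nonempty := card_pos.mp (by omega)
    have hne : σ i ≠ ι (σ i) := by
      intro h
      have hpσi := (mem_flipSet.mp hi).2
      have hpισi := (hp (σ i)).mpr hpσi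
      rw [← h] at hpισi
      exact hpσi hpισi
    have hrest : sign (swap (σ i) (ι (σ i)) * σ) = (-1) ^ n :=
      ih _ ((commute_swap_apply_self hι (σ i)).mul_left hσι)
        (by rw [flipSet_swap_mul hp hσι hi, card_erase_of_mem hi, hn, Nat.add_sub_cancel])
    calc sign σ = sign (swap (σ i) (ι (σ i)) * (swap (σ i) (ι (σ i)) * σ)) := by
          rw [swap_mul_self_mul]
      _ = (-1) ^ (n + 1) := by rw [sign_mul, sign_swap hne, hrest, pow_succ']

end Equiv.Perm

theorem iotaPerm_involutive (n : ℕ) : Function.Involutive (iotaPerm n) := fun i => by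
  have := i.isLt
  ext
  show n - 1 - (n - 1 - (i : ℕ)) = i
  omega

theorem iotaPerm_val_lt_iff (l : ℕ) (i : Fin (2 * l)) :
    (iotaPerm (2 * l) i : ℕ) < l ↔ ¬(i : ℕ) < l := by
  have := i.isLt
  show 2 * l - 1 - (i : ℕ) < l ↔ _
  omega

theorem sign_of_centralizing_perm_general (l : ℕ) (σ : Equiv.Perm (Fin (2 * l)))
    (hσ : σ * iotaPerm (2 * l) = iotaPerm (2 * l) * σ) :
    Equiv.Perm.sign σ =
      (-1) ^ (Finset.univ.filter fun i : Fin (2 * l) =>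
        (i : ℕ) < l ∧ l ≤ ((σ i : Fin (2 * l)) : ℕ)).card := by
  simpa only [Equiv.Perm.flipSet, not_lt] using
    Equiv.Perm.sign_eq_neg_one_pow_card_flipSet (p := fun i : Fin (2 * l) => (i : ℕ) < l)
      (iotaPerm_involutive (2 * l)) (iotaPerm_val_lt_iff l) hσ

/-- If `σ` is a permutation of `{1,…,2l}` commuting with `ι`, then
`sign σ = (−1)^m` where `m` is the number of `i` with `1 ≤ i ≤ l` and `σ(i) ≥ l + 1`. -/
theorem sign_of_centralizing_perm (l : ℕ) (hl : 1 ≤ l) (σ : Equiv.Perm (Fin (2 * l)))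
    (hσ : σ * iotaPerm (2 * l) = iotaPerm (2 * l) * σ) :
    Equiv.Perm.sign σ =
      (-1) ^ (Finset.univ.filter fun i : Fin (2 * l) =>
        (i : ℕ) < l ∧ l ≤ ((σ i : Fin (2 * l)) : ℕ)).card :=
  sign_of_centralizing_perm_general l σ hσ
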